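/- Let P* and Q be probability measures on a product space Ω = Ω₁ × Ω₂∞ with P* ≪ Q, Z = dP*/dQ, and Z_n = E_Q[Z | F_n] the conditional expectation given the first n coordinates. Then the total variation distance between the conditional laws, integrated against the marginal of the first n coordinates under P*, is bounded above by E_Q[|Z − Z_n|]; in particular, if E_Q[|Z_n − Z|] → 0, then the expected total variation distance between the conditional distributions of the future coordinates under P* and under Q, averaged over the first n coordinates under P*, converges to 0. -/

import Mathlib

/-!
Push everything forward along `ω ↦ (X ω, Y ω)`, where `X` is the past and `Y` the future. Under
`Q` the joint law is `Q_X ⊗ ν` with `ν` the conditional law of `Y` given `X`, and under `P` it has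
a density `W` with respect to that. Then `P_X` has density `V a = ∫ W (a, ·) dν a` with respect to
`Q_X`, and the conditional law of `Y` given `X = a` under `P` is `ν a` reweighted by
`W (a, ·) / V a`. For each `a` the total variation distance between the two conditional laws is
at most `∫ |W (a, ·) - V a| dν a / V a`; integrating against `P_X = V • Q_X` cancels the factor
`V a` and leaves `∫ |W - V ∘ fst| d(Q_X ⊗ ν)`. As `ω ↦ (X ω, Y ω)` is a measurable embedding,
`W (X, Y)` is `dP/dQ` and `V X` is its conditional expectation given `X`, so this is
`E_Q |Z - Z_n|`.
-/

open MeasureTheory ProbabilityTheory Filter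
open scoped ENNReal

lemma abs_setIntegral_div_sub_measureReal_le {β : Type*} [MeasurableSpace β] {ν : Measure β}
    [IsFiniteMeasure ν] {w : β → ℝ} (hw : Integrable w ν) {c : ℝ} (hc : 0 < c) (s : Set β) :
    |(∫ x in s, w x ∂ν) / c - ν.real s| ≤ (∫ x, |w x - c| ∂ν) / c := by
  have hsub : (∫ x in s, w x ∂ν) / c - ν.real s = (∫ x in s, (w x - c) ∂ν) / c := by
    rw [integral_sub hw.integrableOn (integrable_const c), setIntegral_const, smul_eq_mul]
    field_simp
  rw [hsub, abs_div, abs_of_pos hc]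
  gcongr
  calc |∫ x in s, (w x - c) ∂ν| ≤ ∫ x in s, |w x - c| ∂ν := abs_integral_le_integral_abs
    _ ≤ ∫ x, |w x - c| ∂ν :=
      setIntegral_le_integral (hw.sub (integrable_const c)).abs (.of_forall fun _ => abs_nonneg _)

namespace MeasureTheory.Measure

variable {α β : Type*} {mα : MeasurableSpace α} {mβ : MeasurableSpace β}
  {σ : Measure α} {ν : Kernel α β} [SFinite σ] [IsSFiniteKernel ν]

lemma withDensity_compProd_left {f : α → ℝ≥0∞} (hf : Measurable f) :
    σ.withDensity f ⊗ₘ ν = (σ ⊗ₘ ν).withDensity (fun p => f p.1) := by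
  ext s hs
  rw [compProd_apply hs, lintegral_withDensity_eq_lintegral_mul _ hf
    (Kernel.measurable_kernel_prodMk_left hs), withDensity_apply _ hs, ← lintegral_indicator hs,
    lintegral_compProd (f := s.indicator fun p => f p.1) ((hf.comp measurable_fst).indicator hs)]
  refine lintegral_congr fun a => ?_
  rw [Pi.mul_apply, ← lintegral_indicator_const (measurable_prodMk_left hs)]
  rfl

lemma fst_withDensity_compProd {W : α × β → ℝ≥0∞} (hW : Measurable W) :
    ((σ ⊗ₘ ν).withDensity W).fst = σ.withDensity fun a => ∫⁻ b, W (a, b) ∂ν a := by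
  ext s hs
  rw [fst_apply hs, withDensity_apply _ (measurable_fst hs), withDensity_apply _ hs,
    ← Set.prod_univ, setLIntegral_compProd hW hs MeasurableSet.univ]
  simp only [restrict_univ]

end MeasureTheory.Measure

namespace ProbabilityTheory.Kernel

variable {α β : Type*} {mα : MeasurableSpace α} {mβ : MeasurableSpace β}
  {ν : Kernel α β} {W : α × β → ℝ≥0∞}

/-- `ν a` reweighted by `W (a, ·)` and normalised to mass one. This only makes sense where
`∫⁻ b, W (a, b) ∂ν a` is neither `0` nor `∞`; elsewhere `0⁻¹ = ∞` and `∞⁻¹ = 0` give junk. -/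
noncomputable def withNormalizedDensity (ν : Kernel α β) [IsSFiniteKernel ν] (W : α × β → ℝ≥0∞) :
    Kernel α β :=
  ν.withDensity fun a b => (∫⁻ b', W (a, b') ∂ν a)⁻¹ * W (a, b)

section SFinite

variable [IsSFiniteKernel ν]

lemma measurable_normalizedDensity (hW : Measurable W) :
    Measurable (Function.uncurry fun a b => (∫⁻ b', W (a, b') ∂ν a)⁻¹ * W (a, b)) :=
  ((hW.lintegral_kernel_prod_right' (κ := ν)).comp measurable_fst).inv.mul hW

lemma withNormalizedDensity_apply (hW : Measurable W) (a : α) (s : Set β) :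
    ν.withNormalizedDensity W a s = (∫⁻ b, W (a, b) ∂ν a)⁻¹ * ∫⁻ b in s, W (a, b) ∂ν a := by
  rw [withNormalizedDensity, Kernel.withDensity_apply' _ (measurable_normalizedDensity hW),
    lintegral_const_mul _ (f := fun b => W (a, b)) (hW.comp measurable_prodMk_left)]

lemma isFiniteKernel_withNormalizedDensity (hW : Measurable W) :
    IsFiniteKernel (ν.withNormalizedDensity W) :=
  ⟨⟨1, ENNReal.one_lt_top, fun a => by
    rw [withNormalizedDensity_apply hW, Measure.restrict_univ]
    exact ENNReal.inv_mul_le_one _⟩⟩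

lemma withDensity_compProd_eq_compProd_withNormalizedDensity {σ : Measure α} [SFinite σ]
    (hW : Measurable W) (hfin : ∀ᵐ a ∂σ, ∫⁻ b, W (a, b) ∂ν a ≠ ∞) :
    (σ ⊗ₘ ν).withDensity W =
      σ.withDensity (fun a => ∫⁻ b, W (a, b) ∂ν a) ⊗ₘ ν.withNormalizedDensity W := by
  have hmarg : Measurable fun a => ∫⁻ b, W (a, b) ∂ν a := hW.lintegral_kernel_prod_right'
  have : IsFiniteKernel (ν.withDensity fun a b => (∫⁻ b', W (a, b') ∂ν a)⁻¹ * W (a, b)) :=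
    isFiniteKernel_withNormalizedDensity hW
  have hfst : Measurable fun p : α × β => ∫⁻ b, W (p.1, b) ∂ν p.1 := hmarg.comp measurable_fst
  have hdens : Measurable fun p : α × β => (∫⁻ b, W (p.1, b) ∂ν p.1)⁻¹ * W (p.1, p.2) :=
    measurable_normalizedDensity hW
  rw [withNormalizedDensity, Measure.compProd_withDensity (measurable_normalizedDensity hW),
    Measure.withDensity_compProd_left hmarg, ← MeasureTheory.withDensity_mul _ hfst hdens]
  refine MeasureTheory.withDensity_congr_ae (Measure.ae_compProd_of_ae_ae
    (measurableSet_eq_fun hW (hfst.mul hdens)) ?_)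
  filter_upwards [hfin] with a hfin_a
  by_cases h0 : ∫⁻ b, W (a, b) ∂ν a = 0
  · filter_upwards [(lintegral_eq_zero_iff (hW.comp measurable_prodMk_left)).1 h0] with b hb
    simp_all
  · refine .of_forall fun b => ?_
    simp only [Pi.mul_apply]
    rw [← mul_assoc, ENNReal.mul_inv_cancel h0 hfin_a, one_mul]

end SFinite

lemma iSup_abs_withNormalizedDensity_sub_le [IsFiniteKernel ν] (hW : Measurable W) {a : α}
    (h0 : ∫⁻ b, W (a, b) ∂ν a ≠ 0) (htop : ∫⁻ b, W (a, b) ∂ν a ≠ ∞) :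
    ⨆ s : {s : Set β // MeasurableSet s},
        |(ν.withNormalizedDensity W a s).toReal - (ν a s).toReal|
      ≤ (∫ b, |(W (a, b)).toReal - (∫⁻ b, W (a, b) ∂ν a).toReal| ∂ν a) /
          (∫⁻ b, W (a, b) ∂ν a).toReal := by
  have hWa : Measurable fun b => W (a, b) := hW.comp measurable_prodMk_left
  have hint : Integrable (fun b => (W (a, b)).toReal) (ν a) :=
    integrable_toReal_of_lintegral_ne_top hWa.aemeasurable htop
  refine Real.iSup_le (fun ⟨s, _⟩ => ?_) (div_nonneg (integral_nonneg fun _ => abs_nonneg _)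
    ENNReal.toReal_nonneg)
  have hs : (ν.withNormalizedDensity W a s).toReal =
      (∫ b in s, (W (a, b)).toReal ∂ν a) / (∫⁻ b, W (a, b) ∂ν a).toReal := by
    rw [withNormalizedDensity_apply hW, ENNReal.toReal_mul, ENNReal.toReal_inv,
      integral_toReal hWa.aemeasurable.restrict (ae_restrict_of_ae (ae_lt_top hWa htop)),
      inv_mul_eq_div]
  rw [hs]
  exact abs_setIntegral_div_sub_measureReal_le hint (ENNReal.toReal_pos h0 htop) s

theorem integral_iSup_abs_withNormalizedDensity_sub_le {σ : Measure α} [SFinite σ]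
    [IsMarkovKernel ν] (hW : Measurable W) (hW_fin : ∫⁻ p, W p ∂(σ ⊗ₘ ν) ≠ ∞) :
    ∫ a, (⨆ s : {s : Set β // MeasurableSet s},
        |(ν.withNormalizedDensity W a s).toReal - (ν a s).toReal|)
        ∂(σ.withDensity fun a => ∫⁻ b, W (a, b) ∂ν a)
      ≤ ∫ p, |(W p).toReal - (∫⁻ b, W (p.1, b) ∂ν p.1).toReal| ∂(σ ⊗ₘ ν) := by
  set V : α → ℝ≥0∞ := fun a => ∫⁻ b, W (a, b) ∂ν a
  have hV : Measurable V := hW.lintegral_kernel_prod_right'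
  have hV_lint : ∫⁻ a, V a ∂σ ≠ ∞ := by rwa [← Measure.lintegral_compProd hW]
  have hV_fin : ∀ᵐ a ∂σ, V a < ∞ := ae_lt_top hV hV_lint
  have hF : Integrable (fun p => |(W p).toReal - (V p.1).toReal|) (σ ⊗ₘ ν) := by
    refine (Integrable.sub ?_ ?_).abs
    · exact integrable_toReal_of_lintegral_ne_top hW.aemeasurable hW_fin
    · refine integrable_toReal_of_lintegral_ne_top (hV.comp measurable_fst).aemeasurable ?_
      rw [Measure.lintegral_compProd (f := fun p => V p.1) (hV.comp measurable_fst)]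
      simpa using hV_lint
  have hD : Integrable (fun a => ∫ b, |(W (a, b)).toReal - (V a).toReal| ∂ν a) σ := by
    simpa using ((Measure.integrable_compProd_iff hF.1).1 hF).2
  rw [integral_withDensity_eq_integral_toReal_smul hV hV_fin, Measure.integral_compProd hF]
  refine integral_mono_of_nonneg (.of_forall fun a => smul_nonneg ENNReal.toReal_nonneg
    (Real.iSup_nonneg fun _ => abs_nonneg _)) hD ?_
  filter_upwards [hV_fin] with a ha
  rcases eq_or_ne (V a) 0 with h0 | h0
  · rw [h0, ENNReal.toReal_zero, zero_smul]
    exact integral_nonneg fun _ => abs_nonneg _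
  · have hpos : 0 < (V a).toReal := ENNReal.toReal_pos h0 ha.ne
    calc (V a).toReal • _ ≤ (V a).toReal * ((∫ b, |(W (a, b)).toReal - (V a).toReal| ∂ν a) /
          (V a).toReal) :=
        mul_le_mul_of_nonneg_left (iSup_abs_withNormalizedDensity_sub_le hW h0 ha.ne) hpos.le
      _ = _ := mul_div_cancel₀ _ hpos.ne'

end ProbabilityTheory.Kernel

namespace ProbabilityTheory

variable {Ω α β : Type*} {mΩ : MeasurableSpace Ω} {mα : MeasurableSpace α}
  {mβ : MeasurableSpace β} [StandardBorelSpace β] [Nonempty β]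

theorem integral_iSup_abs_condDistrib_sub_le {P Q : Measure Ω} [IsFiniteMeasure P]
    [IsFiniteMeasure Q] (hPQ : P ≪ Q) {X : Ω → α} {Y : Ω → β}
    (hXY : MeasurableEmbedding fun ω => (X ω, Y ω)) :
    ∫ a, (⨆ s : {s : Set β // MeasurableSet s},
        |(condDistrib Y X P a s).toReal - (condDistrib Y X Q a s).toReal|) ∂(P.map X)
      ≤ ∫ ω, |(P.rnDeriv Q ω).toReal - Q[fun ω => (P.rnDeriv Q ω).toReal | mα.comap X] ω| ∂Q := by
  have hX : Measurable X := measurable_fst.comp hXY.measurable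
  have hY : Measurable Y := measurable_snd.comp hXY.measurable
  set ν := condDistrib Y X Q
  set W := (P.map fun ω => (X ω, Y ω)).rnDeriv (Q.map fun ω => (X ω, Y ω))
  set V : α → ℝ≥0∞ := fun a => ∫⁻ b, W (a, b) ∂ν a
  have hW : Measurable W := Measure.measurable_rnDeriv _ _
  have hV : Measurable V := hW.lintegral_kernel_prod_right'
  have hjoint : P.map (fun ω => (X ω, Y ω)) = (Q.map X ⊗ₘ ν).withDensity W := by
    rw [compProd_map_condDistrib hY.aemeasurable,
      Measure.withDensity_rnDeriv_eq _ _ (hPQ.map hXY.measurable)]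
  have hmarg : P.map X = (Q.map X).withDensity V := by
    rw [← Measure.fst_map_prodMk hY, hjoint, Measure.fst_withDensity_compProd hW]
  have hW_fin : ∫⁻ p, W p ∂(Q.map X ⊗ₘ ν) ≠ ∞ := by
    rw [← setLIntegral_univ, ← withDensity_apply _ MeasurableSet.univ, ← hjoint]
    exact measure_ne_top _ _
  have hV_fin : ∀ᵐ a ∂(Q.map X), V a ≠ ∞ := by
    refine (ae_lt_top hV ?_).mono fun _ h => h.ne
    rwa [← Measure.lintegral_compProd hW]
  have hcond : condDistrib Y X P =ᵐ[P.map X] ν.withNormalizedDensity W := by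
    have := Kernel.isFiniteKernel_withNormalizedDensity (ν := ν) hW
    refine condDistrib_ae_eq_of_measure_eq_compProd_of_measurable hX hY ?_
    rw [hjoint, Kernel.withDensity_compProd_eq_compProd_withNormalizedDensity hW hV_fin, hmarg]
  have hZ : (fun ω => W (X ω, Y ω)) =ᵐ[Q] P.rnDeriv Q := hXY.rnDeriv_map P Q
  have hZn :
      (fun ω => (V (X ω)).toReal) =ᵐ[Q] Q[fun ω => (P.rnDeriv Q ω).toReal | mα.comap X] := by
    refine EventuallyEq.trans ?_ (toReal_rnDeriv_map hPQ hX)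
    filter_upwards [ae_of_ae_map hX.aemeasurable
      (hmarg ▸ Measure.rnDeriv_withDensity (Q.map X) hV)] with ω hω
    rw [hω]
  calc _ = ∫ a, (⨆ s : {s : Set β // MeasurableSet s},
        |(ν.withNormalizedDensity W a s).toReal - (ν a s).toReal|) ∂(Q.map X).withDensity V := by
        rw [← hmarg]
        exact integral_congr_ae (hcond.mono fun a ha => by simp only [ha, ν])
    _ ≤ ∫ p, |(W p).toReal - (V p.1).toReal| ∂(Q.map X ⊗ₘ ν) :=
        Kernel.integral_iSup_abs_withNormalizedDensity_sub_le hW hW_fin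
    _ = ∫ ω, |(W (X ω, Y ω)).toReal - (V (X ω)).toReal| ∂Q := by
        rw [compProd_map_condDistrib hY.aemeasurable, hXY.integral_map]
    _ = _ := integral_congr_ae (by filter_upwards [hZ, hZn] with ω h1 h2; rw [h1, h2])

end ProbabilityTheory

lemma measurableEmbedding_prefix_shift {E : Type*} [MeasurableSpace E] [StandardBorelSpace E]
    (n : ℕ) :
    MeasurableEmbedding fun ω : ℕ → E => ((fun i : Fin n => ω i), fun i => ω (i + n)) := by
  refine Measurable.measurableEmbedding (by fun_prop) fun ω ω' h => funext fun i => ?_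
  rcases lt_or_ge i n with hi | hi
  · exact congrFun (Prod.ext_iff.1 h).1 ⟨i, hi⟩
  · simpa [Nat.sub_add_cancel hi] using congrFun (Prod.ext_iff.1 h).2 (i - n)

/-- The expected total variation distance between the conditional laws of the future
coordinates under `P*` and under `Q`, averaged over the first `n` coordinates under `P*`,
is bounded by `E_Q[|Z − Z_n|]`; hence it converges to `0` when `E_Q[|Z_n − Z|] → 0`. -/
theorem stmt2
    (P Q : Measure (ℕ → ℝ)) [IsProbabilityMeasure P] [IsProbabilityMeasure Q]
    (hac : P ≪ Q)
    (past : (n : ℕ) → (ℕ → ℝ) → (Fin n → ℝ))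
    (hpast : ∀ n, past n = fun ω (i : Fin n) => ω i)
    (future : (n : ℕ) → (ℕ → ℝ) → (ℕ → ℝ))
    (hfuture : ∀ n, future n = fun ω i => ω (i + n))
    (Z : (ℕ → ℝ) → ℝ) (hZ : Z = fun ω => (P.rnDeriv Q ω).toReal)
    (Zn : ℕ → (ℕ → ℝ) → ℝ)
    (hZn : ∀ n, Zn n = Q[Z | MeasurableSpace.comap (past n) inferInstance]) :
    (∀ n, ∫ y,
        (⨆ s : {s : Set (ℕ → ℝ) // MeasurableSet s},
          |((condDistrib (future n) (past n) P) y s).toReal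
            - ((condDistrib (future n) (past n) Q) y s).toReal|)
        ∂(P.map (past n))
      ≤ ∫ ω, |Z ω - Zn n ω| ∂Q) ∧
    (Tendsto (fun n => ∫ ω, |Zn n ω - Z ω| ∂Q) atTop (nhds 0) →
      Tendsto (fun n => ∫ y,
        (⨆ s : {s : Set (ℕ → ℝ) // MeasurableSet s},
          |((condDistrib (future n) (past n) P) y s).toReal
            - ((condDistrib (future n) (past n) Q) y s).toReal|)
        ∂(P.map (past n))) atTop (nhds 0)) := by
  obtain rfl : past = fun n ω (i : Fin n) => ω i := funext hpast
  obtain rfl : future = fun n ω i => ω (i + n) := funext hfuture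
  obtain rfl : Zn = fun n => Q[Z | MeasurableSpace.comap (fun ω (i : Fin n) => ω i) _] :=
    funext hZn
  subst hZ
  have key n :=
    integral_iSup_abs_condDistrib_sub_le hac (measurableEmbedding_prefix_shift (E := ℝ) n)
  refine ⟨key, fun hlim => squeeze_zero (fun n => integral_nonneg fun _ =>
    Real.iSup_nonneg fun _ => abs_nonneg _) key ?_⟩
  simpa only [abs_sub_comm] using hlim
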